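/- Let G₁ and G₂ be finite simple graphs with n₁, n₂ vertices and m₁, m₂ edges. Then F(G₁ □ G₂) = n₂F(G₁) + n₁F(G₂) + 6m₂M₁(G₁) + 6m₁M₁(G₂), where □ denotes the Cartesian product. -/

import Mathlib

open Finset

/-- Degree of a vertex: the number of its neighbors. -/
noncomputable def degN {V : Type*} (G : SimpleGraph V) (v : V) : ℕ :=
  Nat.card (G.neighborSet v)

/-- F-index: the sum of cubes of the vertex degrees. -/
noncomputable def Findex {V : Type*} [Fintype V] (G : SimpleGraph V) : ℕ :=
  ∑ v, (degN G v) ^ 3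

/-- First Zagreb index: the sum of squares of the vertex degrees. -/
noncomputable def zagrebM1 {V : Type*} [Fintype V] (G : SimpleGraph V) : ℕ :=
  ∑ v, (degN G v) ^ 2

/-- Number of edges of a graph. -/
noncomputable def numEdges {V : Type*} (G : SimpleGraph V) : ℕ :=
  Nat.card G.edgeSet

/-! For a vertex `(u, v)` of `G₁ □ G₂` the degree is `d(u) + d(v)`; expanding `(d(u) + d(v))³`
and summing over the product turns the two mixed terms into products of a degree sum, which is
twice the number of edges by the handshake lemma, and a first Zagreb index. -/

lemma Fintype.sum_prod_add_pow_three {α β R : Type*} [Fintype α] [Fintype β] [CommSemiring R]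
    (f : α → R) (g : β → R) :
    ∑ x : α × β, (f x.1 + g x.2) ^ 3 =
      Fintype.card β * ∑ a, f a ^ 3 + Fintype.card α * ∑ b, g b ^ 3 +
        3 * (∑ b, g b) * ∑ a, f a ^ 2 + 3 * (∑ a, f a) * ∑ b, g b ^ 2 := by
  have add_pow_three (a b : R) : (a + b) ^ 3 = a ^ 3 + 3 * (a ^ 2 * b) + 3 * (a * b ^ 2) + b ^ 3 := by
    ring
  simp only [Fintype.sum_prod_type, add_pow_three, sum_add_distrib, ← mul_sum, ← sum_mul,
    sum_const, card_univ, nsmul_eq_mul]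
  ring

lemma degN_eq_degree {V : Type*} (G : SimpleGraph V) (v : V) [Fintype (G.neighborSet v)] :
    degN G v = G.degree v := by
  rw [degN, Nat.card_eq_fintype_card, SimpleGraph.card_neighborSet_eq_degree]

lemma sum_degN_eq_two_mul_numEdges {V : Type*} [Fintype V] (G : SimpleGraph V) :
    ∑ v, degN G v = 2 * numEdges G := by
  classical
  simp only [degN_eq_degree, G.sum_degrees_eq_twice_card_edges, numEdges,
    Nat.card_eq_fintype_card, SimpleGraph.edgeFinset_card]

lemma degN_boxProd {V₁ V₂ : Type*} (G₁ : SimpleGraph V₁) (G₂ : SimpleGraph V₂)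
    [G₁.LocallyFinite] [G₂.LocallyFinite] (x : V₁ × V₂) :
    degN (G₁ □ G₂) x = degN G₁ x.1 + degN G₂ x.2 := by
  classical
  rw [degN_eq_degree, degN_eq_degree, degN_eq_degree, SimpleGraph.degree_boxProd]

theorem Findex_boxProd {V₁ V₂ : Type*} [Fintype V₁] [Fintype V₂]
    (G₁ : SimpleGraph V₁) (G₂ : SimpleGraph V₂)
    (n₁ n₂ m₁ m₂ : ℕ) (hn₁ : Fintype.card V₁ = n₁) (hn₂ : Fintype.card V₂ = n₂)
    (hm₁ : numEdges G₁ = m₁) (hm₂ : numEdges G₂ = m₂) :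
    Findex (G₁ □ G₂) =
      n₂ * Findex G₁ + n₁ * Findex G₂ + 6 * m₂ * zagrebM1 G₁ + 6 * m₁ * zagrebM1 G₂ := by
  classical
  subst hn₁ hn₂ hm₁ hm₂
  simp only [Findex, zagrebM1, degN_boxProd, Fintype.sum_prod_add_pow_three,
    sum_degN_eq_two_mul_numEdges, Nat.cast_id]
  ring
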